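/- arXiv:1805.06579 — 3 statements merged into one kernel-verified Lean document; each statement's English description precedes it below -/
import Mathlib

section
/- Let X : I → ℝⁿ be a continuously differentiable solution of the ADMM flow AᵀA Ẋ(t) + ∇V(X(t)) = 0 on an interval I. Then for every t ∈ I, the derivative of t ↦ V(X(t)) equals −‖A Ẋ(t)‖². -/
open Matrix Set

theorem HasGradientAt.comp_hasDerivAt {E : Type*} [NormedAddCommGroup E]
    [InnerProductSpace ℝ E] [CompleteSpace E] {V : E → ℝ} {v : E} {X : ℝ → E} {x' : E} {t : ℝ}
    (hV : HasGradientAt V v (X t)) (hX : HasDerivAt X x' t) :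
    HasDerivAt (fun s => V (X s)) (inner ℝ v x') t := by
  rw [← InnerProductSpace.toDual_apply_apply]
  exact hV.hasFDerivAt.comp_hasDerivAt t hX

theorem Matrix.inner_toEuclideanLin_transpose_mul_self {m n : Type*} [Fintype m] [Fintype n]
    [DecidableEq m] [DecidableEq n] (A : Matrix m n ℝ) (x : EuclideanSpace ℝ n) :
    inner ℝ (toEuclideanLin (Aᵀ * A) x) x = ‖toEuclideanLin A x‖ ^ 2 := by
  rw [toLpLin_mul_same, LinearMap.comp_apply, ← conjTranspose_eq_transpose_of_trivial,
    toEuclideanLin_conjTranspose_eq_adjoint, LinearMap.adjoint_inner_left, real_inner_self_eq_norm_sq]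

theorem admm_flow_energy_dissipation_general
    {m n : ℕ}
    (f : EuclideanSpace ℝ (Fin n) → ℝ) (g : EuclideanSpace ℝ (Fin m) → ℝ)
    (hf : ContDiff ℝ 1 f) (hg : ContDiff ℝ 1 g)
    (A : Matrix (Fin m) (Fin n) ℝ)
    (V : EuclideanSpace ℝ (Fin n) → ℝ)
    (hV : ∀ x, V x = f x + g (Matrix.toEuclideanLin A x))
    (I : Set ℝ)
    (X X' : ℝ → EuclideanSpace ℝ (Fin n))
    (hX : ∀ t ∈ I, HasDerivAt X (X' t) t)
    (hflow : ∀ t ∈ I,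
      Matrix.toEuclideanLin (Aᵀ * A) (X' t) + gradient V (X t) = 0) :
    ∀ t ∈ I, HasDerivAt (fun s => V (X s))
      (-‖Matrix.toEuclideanLin A (X' t)‖ ^ 2) t := by
  intro t ht
  have hVdiff : Differentiable ℝ V := by
    rw [funext hV]
    exact (hf.differentiable one_ne_zero).add
      ((hg.differentiable one_ne_zero).comp (toEuclideanLin A).toContinuousLinearMap.differentiable)
  have hgrad : gradient V (X t) = -toEuclideanLin (Aᵀ * A) (X' t) :=
    eq_neg_of_add_eq_zero_right (hflow t ht)
  have hdiss := (hVdiff (X t)).hasGradientAt.comp_hasDerivAt (hX t ht)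
  rwa [hgrad, inner_neg_left, inner_toEuclideanLin_transpose_mul_self] at hdiss

/-- **Energy dissipation along the ADMM flow.**
If `X` is a continuously differentiable solution of the ADMM flow
`AᵀA Ẋ(t) + ∇V(X(t)) = 0` on an interval `I`, then for every `t ∈ I` the derivative
of `t ↦ V(X(t))` equals `−‖AẊ(t)‖²`. -/
theorem admm_flow_energy_dissipation
    {m n : ℕ} (hmn : n ≤ m)
    (f : EuclideanSpace ℝ (Fin n) → ℝ) (g : EuclideanSpace ℝ (Fin m) → ℝ)
    (hf : ContDiff ℝ 1 f) (hg : ContDiff ℝ 1 g)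
    (hfconv : ConvexOn ℝ Set.univ f) (hgconv : ConvexOn ℝ Set.univ g)
    (A : Matrix (Fin m) (Fin n) ℝ) (hA : A.rank = n)
    (V : EuclideanSpace ℝ (Fin n) → ℝ)
    (hV : ∀ x, V x = f x + g (Matrix.toEuclideanLin A x))
    (I : Set ℝ) (hI : I.OrdConnected)
    (X X' : ℝ → EuclideanSpace ℝ (Fin n))
    (hX : ∀ t ∈ I, HasDerivAt X (X' t) t)
    (hX' : ContinuousOn X' I)
    (hflow : ∀ t ∈ I,
      Matrix.toEuclideanLin (Aᵀ * A) (X' t) + gradient V (X t) = 0) :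
    ∀ t ∈ I, HasDerivAt (fun s => V (X s))
      (-‖Matrix.toEuclideanLin A (X' t)‖ ^ 2) t :=
  admm_flow_energy_dissipation_general f g hf hg A V hV I X X' hX hflow
end

section
/- Let r ≥ 3 and let X : [t₀, ∞) → ℝⁿ (with t₀ > 0) be a twice continuously differentiable solution of the A-ADMM flow AᵀA (Ẍ(t) + (r/t) Ẋ(t)) + ∇V(X(t)) = 0, and let X⋆ be a minimizer of V with V⋆ = V(X⋆). Then there exists a constant C > 0 such that V(X(t)) − V⋆ ≤ C/t² for all t ≥ t₀; one may take C = t₀²(V(X(t₀)) − V⋆) + ((r−1)²/2)·‖A(X(t₀) − X⋆ + (t₀/(r−1)) Ẋ(t₀))‖². -/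
open Matrix Set InnerProductSpace

/-!
Along the flow, the energy
`E(t) = t² (V(X t) − V⋆) + ((r−1)²/2) ‖A (X t − X⋆ + (t/(r−1)) Ẋ t)‖²`
has derivative `2t (V(X t) − V⋆) − (r−1) t ⟪X t − X⋆, ∇V(X t)⟫`: the flow equation turns the
derivative of the second term, after moving `AᵀA` across the inner product, into a multiple of
`∇V(X t)`, and the `t² ⟪∇V, Ẋ⟫` terms cancel. By convexity `V(X t) − V⋆ ≤ ⟪X t − X⋆, ∇V(X t)⟫`,
so `E' ≤ (3 − r) t (V(X t) − V⋆) ≤ 0` for `r ≥ 3`. Hence `t² (V(X t) − V⋆) ≤ E(t) ≤ E(t₀)`.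
-/

theorem ConvexOn.fderiv_apply_sub_le {E : Type*} [NormedAddCommGroup E] [NormedSpace ℝ E]
    {V : E → ℝ} {V' : E →L[ℝ] ℝ} {x : E} (hconv : ConvexOn ℝ univ V) (hV : HasFDerivAt V V' x)
    (y : E) : V' (y - x) ≤ V y - V x := by
  have hline : ConvexOn ℝ univ (fun s : ℝ => V (x + s • (y - x))) := by
    simpa [Function.comp_def, AffineMap.lineMap_apply_module', add_comm] using
      hconv.comp_affineMap (AffineMap.lineMap x y : ℝ →ᵃ[ℝ] E)
  have hderiv : HasDerivAt (fun s : ℝ => V (x + s • (y - x))) (V' (y - x)) 0 := by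
    have hpath : HasDerivAt (fun s : ℝ => x + s • (y - x)) (y - x) 0 := by
      simpa using ((hasDerivAt_id (0 : ℝ)).smul_const (y - x)).const_add x
    exact hV.comp_hasDerivAt_of_eq 0 hpath (by simp)
  simpa [slope_def_field] using
    hline.le_slope_of_hasDerivWithinAt (mem_univ 0) (mem_univ 1) zero_lt_one
      hderiv.hasDerivWithinAt

theorem ConvexOn.sub_le_inner_gradient {E : Type*} [NormedAddCommGroup E]
    [InnerProductSpace ℝ E] [CompleteSpace E] {V : E → ℝ} (hconv : ConvexOn ℝ univ V)
    {x : E} (hV : DifferentiableAt ℝ V x) (y : E) : V x - V y ≤ ⟪x - y, gradient V x⟫_ℝ := by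
  have := hconv.fderiv_apply_sub_le hV.hasFDerivAt y
  rw [real_inner_comm, inner_gradient_left, ← neg_sub y x, map_neg]
  linarith

theorem Matrix.toEuclideanLin_transpose_mul_self {m n : Type*} [Fintype m] [Fintype n]
    [DecidableEq m] [DecidableEq n] (A : Matrix m n ℝ) (v : EuclideanSpace ℝ n) :
    toEuclideanLin (Aᵀ * A) v =
      (toEuclideanLin A).toContinuousLinearMap.adjoint
        ((toEuclideanLin A).toContinuousLinearMap v) := by
  calc toEuclideanLin (Aᵀ * A) v = toEuclideanLin Aᴴ (toEuclideanLin A v) := by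
        simp
    _ = _ := by rw [toEuclideanLin_conjTranspose_eq_adjoint]; rfl

section Energy

variable {E F : Type*} [NormedAddCommGroup E] [InnerProductSpace ℝ E]
  [NormedAddCommGroup F] [InnerProductSpace ℝ F]

noncomputable def aadmmEnergy (L : E →L[ℝ] F) (V : E → ℝ) (xstar : E) (r : ℝ) (X X' : ℝ → E) (t : ℝ) : ℝ :=
  t ^ 2 * (V (X t) - V xstar) + (r - 1) ^ 2 / 2 * ‖L (X t - xstar + (t / (r - 1)) • X' t)‖ ^ 2

theorem aadmmEnergy_nonneg (L : E →L[ℝ] F) {V : E → ℝ} {xstar : E} (hmin : ∀ x, V xstar ≤ V x)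
    (r : ℝ) (X X' : ℝ → E) (t : ℝ) : 0 ≤ aadmmEnergy L V xstar r X X' t := by
  have := sub_nonneg.mpr (hmin (X t))
  unfold aadmmEnergy
  positivity

theorem sq_mul_sub_le_aadmmEnergy (L : E →L[ℝ] F) (V : E → ℝ) (xstar : E) (r : ℝ)
    (X X' : ℝ → E) (t : ℝ) : t ^ 2 * (V (X t) - V xstar) ≤ aadmmEnergy L V xstar r X X' t := by
  unfold aadmmEnergy
  have : 0 ≤ (r - 1) ^ 2 / 2 * ‖L (X t - xstar + (t / (r - 1)) • X' t)‖ ^ 2 := by positivity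
  linarith

variable [CompleteSpace E] [CompleteSpace F] {L : E →L[ℝ] F} {V : E → ℝ} {xstar : E} {r : ℝ}
  {X X' X'' : ℝ → E}

theorem hasDerivAt_aadmmEnergy {t : ℝ} (hr : r ≠ 1) (ht : t ≠ 0)
    (hX : HasDerivAt X (X' t) t) (hX' : HasDerivAt X' (X'' t) t)
    (hV : DifferentiableAt ℝ V (X t))
    (hflow : L.adjoint (L (X'' t + (r / t) • X' t)) + gradient V (X t) = 0) :
    HasDerivAt (aadmmEnergy L V xstar r X X')
      (2 * t * (V (X t) - V xstar) - (r - 1) * t * ⟪X t - xstar, gradient V (X t)⟫_ℝ) t := by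
  have hr1 : r - 1 ≠ 0 := sub_ne_zero.mpr hr
  have hW : HasDerivAt (fun s => X s - xstar + (s / (r - 1)) • X' s)
      ((t / (r - 1)) • (X'' t + (r / t) • X' t)) t := by
    refine ((hX.sub_const xstar).add
      (((hasDerivAt_id t).div_const (r - 1)).smul hX')).congr_deriv ?_
    simp only [id, smul_add, smul_smul]
    rw [show t / (r - 1) * (r / t) = 1 + 1 / (r - 1) by field_simp; ring]
    module
  have hVX : HasDerivAt (fun s => V (X s)) ⟪gradient V (X t), X' t⟫_ℝ t := by
    simpa [Function.comp_def, inner_gradient_left] using hV.hasFDerivAt.comp_hasDerivAt t hX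
  refine (((hasDerivAt_pow 2 t).mul (hVX.sub_const (V xstar))).add
    (((L.hasFDerivAt.comp_hasDerivAt t hW).norm_sq).const_mul ((r - 1) ^ 2 / 2))).congr_deriv ?_
  have hcross : ⟪L (X t - xstar + (t / (r - 1)) • X' t),
      L ((t / (r - 1)) • (X'' t + (r / t) • X' t))⟫_ℝ =
        -(t / (r - 1)) * (⟪X t - xstar, gradient V (X t)⟫_ℝ
          + t / (r - 1) * ⟪gradient V (X t), X' t⟫_ℝ) := by
    rw [map_smul, inner_smul_right, ← L.adjoint_inner_right, eq_neg_of_add_eq_zero_left hflow,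
      inner_neg_right, inner_add_left, real_inner_smul_left, real_inner_comm (X' t)]
    ring
  rw [Function.comp_apply, hcross]
  field_simp
  ring

theorem antitoneOn_aadmmEnergy {t₀ : ℝ} (hr : 3 ≤ r) (ht₀ : 0 < t₀)
    (hconv : ConvexOn ℝ univ V) (hV : Differentiable ℝ V) (hmin : ∀ x, V xstar ≤ V x)
    (hX : ∀ t ∈ Ici t₀, HasDerivAt X (X' t) t) (hX' : ∀ t ∈ Ici t₀, HasDerivAt X' (X'' t) t)
    (hflow : ∀ t ∈ Ici t₀, L.adjoint (L (X'' t + (r / t) • X' t)) + gradient V (X t) = 0) :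
    AntitoneOn (aadmmEnergy L V xstar r X X') (Ici t₀) := by
  have hderiv : ∀ t ∈ Ici t₀, HasDerivAt (aadmmEnergy L V xstar r X X')
      (2 * t * (V (X t) - V xstar) - (r - 1) * t * ⟪X t - xstar, gradient V (X t)⟫_ℝ) t :=
    fun t ht => hasDerivAt_aadmmEnergy (by linarith) (ht₀.trans_le ht).ne' (hX t ht) (hX' t ht)
      (hV _) (hflow t ht)
  refine antitoneOn_of_hasDerivWithinAt_nonpos (convex_Ici t₀)
    (fun t ht => (hderiv t ht).continuousAt.continuousWithinAt)
    (fun t ht => (hderiv t (interior_subset ht)).hasDerivWithinAt) fun t ht => ?_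
  rw [interior_Ici] at ht
  have ht0 : 0 ≤ t := ht₀.le.trans ht.le
  have hgap : 0 ≤ V (X t) - V xstar := sub_nonneg.mpr (hmin _)
  have hcvx := hconv.sub_le_inner_gradient (hV (X t)) xstar
  nlinarith [mul_nonneg ht0 hgap, mul_nonneg ht0 (sub_nonneg.mpr hcvx),
    mul_nonneg (mul_nonneg ht0 (sub_nonneg.mpr hr)) (hgap.trans hcvx)]

theorem sub_le_aadmmEnergy_div_sq {t₀ t : ℝ} (hr : 3 ≤ r) (ht₀ : 0 < t₀)
    (hconv : ConvexOn ℝ univ V) (hV : Differentiable ℝ V) (hmin : ∀ x, V xstar ≤ V x)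
    (hX : ∀ t ∈ Ici t₀, HasDerivAt X (X' t) t) (hX' : ∀ t ∈ Ici t₀, HasDerivAt X' (X'' t) t)
    (hflow : ∀ t ∈ Ici t₀, L.adjoint (L (X'' t + (r / t) • X' t)) + gradient V (X t) = 0)
    (ht : t₀ ≤ t) : V (X t) - V xstar ≤ aadmmEnergy L V xstar r X X' t₀ / t ^ 2 := by
  rw [le_div_iff₀ (pow_pos (ht₀.trans_le ht) 2), mul_comm]
  exact (sq_mul_sub_le_aadmmEnergy L V xstar r X X' t).trans
    (antitoneOn_aadmmEnergy hr ht₀ hconv hV hmin hX hX' hflow self_mem_Ici ht ht)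

end Energy

theorem aadmm_flow_convergence_rate_general
    {m n : ℕ}
    (f : EuclideanSpace ℝ (Fin n) → ℝ) (g : EuclideanSpace ℝ (Fin m) → ℝ)
    (hf : ContDiff ℝ 1 f) (hg : ContDiff ℝ 1 g)
    (hfconv : ConvexOn ℝ Set.univ f) (hgconv : ConvexOn ℝ Set.univ g)
    (A : Matrix (Fin m) (Fin n) ℝ)
    (V : EuclideanSpace ℝ (Fin n) → ℝ)
    (hV : ∀ x, V x = f x + g (Matrix.toEuclideanLin A x))
    (r : ℝ) (hr : 3 ≤ r)
    (t₀ : ℝ) (ht₀ : 0 < t₀)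
    (X X' X'' : ℝ → EuclideanSpace ℝ (Fin n))
    (hX : ∀ t ∈ Set.Ici t₀, HasDerivAt X (X' t) t)
    (hX' : ∀ t ∈ Set.Ici t₀, HasDerivAt X' (X'' t) t)
    (hflow : ∀ t ∈ Set.Ici t₀,
      Matrix.toEuclideanLin (Aᵀ * A) (X'' t + (r / t) • X' t) + gradient V (X t) = 0)
    (Xstar : EuclideanSpace ℝ (Fin n)) (hXstar : ∀ x, V Xstar ≤ V x)
    (Vstar : ℝ) (hVstar : Vstar = V Xstar) :
    (∃ C > (0 : ℝ), ∀ t ∈ Set.Ici t₀, V (X t) - Vstar ≤ C / t ^ 2) ∧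
      ∀ t ∈ Set.Ici t₀,
        V (X t) - Vstar ≤
          (t₀ ^ 2 * (V (X t₀) - Vstar)
            + ((r - 1) ^ 2 / 2) *
              ‖Matrix.toEuclideanLin A (X t₀ - Xstar + (t₀ / (r - 1)) • X' t₀)‖ ^ 2)
          / t ^ 2 := by
  subst hVstar
  set L := (toEuclideanLin A).toContinuousLinearMap
  have hVeq : V = fun x => f x + g (L x) := funext hV
  have hVdiff : Differentiable ℝ V := hVeq ▸
    (hf.differentiable one_ne_zero).add ((hg.differentiable one_ne_zero).comp L.differentiable)
  have hVconv : ConvexOn ℝ univ V := hVeq ▸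
    hfconv.add (hgconv.comp_linearMap L.toLinearMap)
  have hrate : ∀ t ∈ Ici t₀, V (X t) - V Xstar ≤ aadmmEnergy L V Xstar r X X' t₀ / t ^ 2 :=
    fun t => sub_le_aadmmEnergy_div_sq hr ht₀ hVconv hVdiff hXstar hX hX'
      (fun t ht => toEuclideanLin_transpose_mul_self A _ ▸ hflow t ht)
  have hE₀ := aadmmEnergy_nonneg L hXstar r X X' t₀
  refine ⟨⟨aadmmEnergy L V Xstar r X X' t₀ + 1, by linarith, fun t ht => (hrate t ht).trans ?_⟩,
    hrate⟩
  gcongr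
  linarith

/-- **Convergence rate of the A-ADMM flow.**
Let `r ≥ 3` and let `X` be a twice continuously differentiable solution of the A-ADMM
flow `AᵀA(Ẍ(t) + (r/t)Ẋ(t)) + ∇V(X(t)) = 0` on `[t₀, ∞)` (with `t₀ > 0`), and let `X⋆`
be a minimizer of `V` with `V⋆ = V(X⋆)`. Then there is `C > 0` with
`V(X(t)) − V⋆ ≤ C/t²` for all `t ≥ t₀`; one may take
`C = t₀²(V(X(t₀)) − V⋆) + ((r−1)²/2)‖A(X(t₀) − X⋆ + (t₀/(r−1))Ẋ(t₀))‖²`. -/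
theorem aadmm_flow_convergence_rate
    {m n : ℕ} (hmn : n ≤ m)
    (f : EuclideanSpace ℝ (Fin n) → ℝ) (g : EuclideanSpace ℝ (Fin m) → ℝ)
    (hf : ContDiff ℝ 1 f) (hg : ContDiff ℝ 1 g)
    (hfconv : ConvexOn ℝ Set.univ f) (hgconv : ConvexOn ℝ Set.univ g)
    (A : Matrix (Fin m) (Fin n) ℝ) (hA : A.rank = n)
    (V : EuclideanSpace ℝ (Fin n) → ℝ)
    (hV : ∀ x, V x = f x + g (Matrix.toEuclideanLin A x))
    (r : ℝ) (hr : 3 ≤ r)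
    (t₀ : ℝ) (ht₀ : 0 < t₀)
    (X X' X'' : ℝ → EuclideanSpace ℝ (Fin n))
    (hX : ∀ t ∈ Set.Ici t₀, HasDerivAt X (X' t) t)
    (hX' : ∀ t ∈ Set.Ici t₀, HasDerivAt X' (X'' t) t)
    (hX'' : ContinuousOn X'' (Set.Ici t₀))
    (hflow : ∀ t ∈ Set.Ici t₀,
      Matrix.toEuclideanLin (Aᵀ * A) (X'' t + (r / t) • X' t) + gradient V (X t) = 0)
    (Xstar : EuclideanSpace ℝ (Fin n)) (hXstar : ∀ x, V Xstar ≤ V x)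
    (Vstar : ℝ) (hVstar : Vstar = V Xstar) :
    (∃ C > (0 : ℝ), ∀ t ∈ Set.Ici t₀, V (X t) - Vstar ≤ C / t ^ 2) ∧
      ∀ t ∈ Set.Ici t₀,
        V (X t) - Vstar ≤
          (t₀ ^ 2 * (V (X t₀) - Vstar)
            + ((r - 1) ^ 2 / 2) *
              ‖Matrix.toEuclideanLin A (X t₀ - Xstar + (t₀ / (r - 1)) • X' t₀)‖ ^ 2)
          / t ^ 2 :=
  aadmm_flow_convergence_rate_general f g hf hg hfconv hgconv A V hV r hr t₀ ht₀ X X' X'' hX hX'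
    hflow Xstar hXstar Vstar hVstar
end

section
/- Let r > 0 and let X⋆ be a strict local minimizer of V, i.e., there is an open set O ⊆ ℝⁿ containing X⋆ with V(X) > V(X⋆) for all X ∈ O \ {X⋆}. Then the point (X⋆, 0) is a stable critical point of the first-order system Ẏ₁ = Y₂, Ẏ₂ = −(r/t) Y₂ − (AᵀA)⁻¹ ∇V(Y₁) (equivalent to the A-ADMM flow): for every ε > 0 with the closed ε-ball around X⋆ contained in O, there exists δ > 0 such that every twice continuously differentiable solution X : [t₀, ∞) → ℝⁿ (t₀ > 0) of the A-ADMM flow with ‖X(t₀) − X⋆‖ < δ and ‖Ẋ(t₀)‖ < δ satisfies ‖X(t) − X⋆‖ < ε and ‖Ẋ(t)‖ < ε for all t ≥ t₀. -/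
open Matrix Set
open scoped RealInnerProductSpace

/-!
Along the flow the energy `‖A Ẋ‖² / 2 + V(X)` has derivative `-(r/t) ‖A Ẋ‖² ≤ 0`. By compactness,
`V` exceeds `V(X⋆)` by a margin `κ > 0` on the sphere `‖X - X⋆‖ = ε`, and full column rank gives
`c ‖v‖ ≤ ‖A v‖` for some `c > 0`. A trajectory starting close enough to `(X⋆, 0)` keeps its energy
below `V(X⋆) + min κ ((c ε)² / 2)` forever. Hence it never meets the sphere, so it stays in the ball
where `V ≥ V(X⋆)`, and there the kinetic term forces `‖A Ẋ‖ < c ε`, i.e. `‖Ẋ‖ < ε`.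
Nothing changes when `AᵀA` is replaced by `T* T` for an injective `T` on a finite-dimensional
space and `r / t` by any nonnegative damping.
-/

theorem Matrix.mulVec_injective_of_rank_eq_card {m n R : Type*} [Fintype n] [Field R]
    {A : Matrix m n R} (hA : A.rank = Fintype.card n) : Function.Injective A.mulVec := by
  rw [mulVec_injective_iff, linearIndependent_iff_card_eq_finrank_span, ← hA]
  exact A.rank_eq_finrank_span_cols

theorem Matrix.toEuclideanLin_injective_of_rank_eq_card {m n : Type*} [Fintype n] [DecidableEq n]
    {A : Matrix m n ℝ} (hA : A.rank = Fintype.card n) :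
    Function.Injective (toEuclideanLin A) := by
  intro x y hxy
  exact WithLp.ofLp_injective 2 (mulVec_injective_of_rank_eq_card hA (congrArg WithLp.ofLp hxy))

theorem Matrix.toEuclideanLin_transpose_mul_self_apply {m n : Type*} [Fintype m] [Fintype n]
    [DecidableEq m] [DecidableEq n] (A : Matrix m n ℝ) (x : EuclideanSpace ℝ n) :
    toEuclideanLin (Aᵀ * A) x =
      (toEuclideanLin A).toContinuousLinearMap.adjoint
        ((toEuclideanLin A).toContinuousLinearMap x) := by
  rw [← LinearMap.adjoint_toContinuousLinearMap, LinearMap.coe_toContinuousLinearMap',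
    LinearMap.coe_toContinuousLinearMap',
    ← toEuclideanLin_conjTranspose_eq_adjoint, conjTranspose_eq_transpose_of_trivial]
  simp only [toLpLin_mul_same, LinearMap.coe_comp, Function.comp_apply]

theorem LinearMap.exists_pos_mul_norm_le_of_injective {𝕜 E F : Type*} [NontriviallyNormedField 𝕜]
    [CompleteSpace 𝕜] [NormedAddCommGroup E] [NormedSpace 𝕜 E] [FiniteDimensional 𝕜 E]
    [NormedAddCommGroup F] [NormedSpace 𝕜 F] {T : E →ₗ[𝕜] F} (hT : Function.Injective T) :
    ∃ c > 0, ∀ x, c * ‖x‖ ≤ ‖T x‖ := by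
  obtain ⟨K, hK, hanti⟩ := T.injective_iff_antilipschitz.mp hT
  refine ⟨(K : ℝ)⁻¹, by positivity, fun x => ?_⟩
  rw [inv_mul_le_iff₀ (by positivity)]
  exact ZeroHomClass.bound_of_antilipschitz T hanti x

theorem IsPreconnected.mapsTo_ball_of_mapsTo_compl_sphere {α E : Type*} [TopologicalSpace α]
    [PseudoMetricSpace E] {s : Set α} (hs : IsPreconnected s) {X : α → E} (hX : ContinuousOn X s)
    {t₀ : α} (ht₀ : t₀ ∈ s) {x : E} {ε : ℝ} (h₀ : X t₀ ∈ Metric.ball x ε)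
    (hsph : MapsTo X s (Metric.sphere x ε)ᶜ) : MapsTo X s (Metric.ball x ε) := by
  intro t ht
  by_contra hout
  rw [Metric.mem_ball, not_lt] at hout
  have hdist : ContinuousOn (fun u => dist (X u) x) s :=
    continuous_dist.comp_continuousOn (hX.prodMk continuousOn_const)
  obtain ⟨u, hu, hux⟩ := hs.intermediate_value ht₀ ht hdist ⟨(Metric.mem_ball.mp h₀).le, hout⟩
  exact hsph hu hux

section DampedFlow

variable {E F : Type*} [NormedAddCommGroup E] [InnerProductSpace ℝ E]
  [NormedAddCommGroup F] [InnerProductSpace ℝ F] (T : E →L[ℝ] F) (V : E → ℝ)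

noncomputable def dampedEnergy (X X' : ℝ → E) (t : ℝ) : ℝ := ‖T (X' t)‖ ^ 2 / 2 + V (X t)

theorem exists_energy_lt_of_norm_lt (hV : Continuous V) (x₀ : E) {b : ℝ} (hb : 0 < b) :
    ∃ δ > 0, ∀ x v : E, ‖x - x₀‖ < δ → ‖v‖ < δ → ‖T v‖ ^ 2 / 2 + V x < V x₀ + b := by
  have hcont : ContinuousAt (fun p : E × E => ‖T p.2‖ ^ 2 / 2 + V p.1) (x₀, 0) := by fun_prop
  obtain ⟨δ, hδ, hnear⟩ := Metric.continuousAt_iff.mp hcont b hb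
  refine ⟨δ, hδ, fun x v hx hv => ?_⟩
  have hclose : dist (x, v) (x₀, 0) < δ := by
    rw [Prod.dist_eq, dist_eq_norm, dist_zero_right]
    exact max_lt hx hv
  have := (abs_lt.mp (hnear hclose)).2
  simp only [map_zero, norm_zero] at this
  linarith

variable [CompleteSpace E] [CompleteSpace F]

theorem hasDerivAt_dampedEnergy {X X' X'' : ℝ → E} {t γ : ℝ} (hV : DifferentiableAt ℝ V (X t))
    (hX : HasDerivAt X (X' t) t) (hX' : HasDerivAt X' (X'' t) t)
    (hflow : T.adjoint (T (X'' t + γ • X' t)) + gradient V (X t) = 0) :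
    HasDerivAt (dampedEnergy T V X X') (-(γ * ‖T (X' t)‖ ^ 2)) t := by
  have hkin : HasDerivAt (fun s => ‖T (X' s)‖ ^ 2) (2 * ⟪T (X' t), T (X'' t)⟫) t :=
    (T.hasFDerivAt.comp_hasDerivAt t hX').norm_sq
  have hpot : HasDerivAt (fun s => V (X s)) ⟪gradient V (X t), X' t⟫ t := by
    rw [inner_gradient_left]
    exact hV.hasFDerivAt.comp_hasDerivAt t hX
  have hpower : ⟪gradient V (X t), X' t⟫ = -⟪T (X'' t), T (X' t)⟫ - γ * ‖T (X' t)‖ ^ 2 := by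
    rw [eq_neg_of_add_eq_zero_right hflow, inner_neg_left,
      ContinuousLinearMap.adjoint_inner_left, map_add, map_smul, inner_add_left,
      real_inner_smul_left, real_inner_self_eq_norm_sq]
    ring
  refine ((hkin.div_const 2).add hpot).congr_deriv ?_
  rw [hpower, real_inner_comm]
  ring

theorem antitoneOn_dampedEnergy {s : Set ℝ} (hs : Convex ℝ s) (hV : Differentiable ℝ V)
    {γ : ℝ → ℝ} {X X' X'' : ℝ → E} (hγ : ∀ t ∈ s, 0 ≤ γ t)
    (hX : ∀ t ∈ s, HasDerivAt X (X' t) t) (hX' : ∀ t ∈ s, HasDerivAt X' (X'' t) t)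
    (hflow : ∀ t ∈ s, T.adjoint (T (X'' t + γ t • X' t)) + gradient V (X t) = 0) :
    AntitoneOn (dampedEnergy T V X X') s := by
  have hE : ∀ t ∈ s, HasDerivAt (dampedEnergy T V X X') (-(γ t * ‖T (X' t)‖ ^ 2)) t :=
    fun t ht => hasDerivAt_dampedEnergy T V (hV _) (hX t ht) (hX' t ht) (hflow t ht)
  refine antitoneOn_of_hasDerivWithinAt_nonpos hs
    (fun t ht => (hE t ht).continuousAt.continuousWithinAt)
    (fun t ht => (hE t (interior_subset ht)).hasDerivWithinAt) fun t ht => ?_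
  exact neg_nonpos.mpr (mul_nonneg (hγ t (interior_subset ht)) (sq_nonneg _))

variable [FiniteDimensional ℝ E]

theorem dampedFlow_lyapunov_stable (hT : Function.Injective T) (hV : Differentiable ℝ V)
    {x₀ : E} {ε : ℝ} (hε : 0 < ε) (hmin : ∀ x ∈ Metric.closedBall x₀ ε, x ≠ x₀ → V x₀ < V x) :
    ∃ δ > 0, ∀ (t₀ : ℝ) (γ : ℝ → ℝ) (X X' X'' : ℝ → E), (∀ t ∈ Ici t₀, 0 ≤ γ t) →
      (∀ t ∈ Ici t₀, HasDerivAt X (X' t) t) → (∀ t ∈ Ici t₀, HasDerivAt X' (X'' t) t) →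
      (∀ t ∈ Ici t₀, T.adjoint (T (X'' t + γ t • X' t)) + gradient V (X t) = 0) →
      ‖X t₀ - x₀‖ < δ → ‖X' t₀‖ < δ → ∀ t ∈ Ici t₀, ‖X t - x₀‖ < ε ∧ ‖X' t‖ < ε := by
  obtain ⟨c, hc, hcT⟩ := LinearMap.exists_pos_mul_norm_le_of_injective (T := T.toLinearMap) hT
  obtain ⟨a, ha, haV⟩ := (isCompact_sphere x₀ ε).exists_forall_le' hV.continuous.continuousOn
    fun x hx => hmin x (Metric.sphere_subset_closedBall hx) (Metric.ne_of_mem_sphere hx hε.ne')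
  set b := min (a - V x₀) ((c * ε) ^ 2 / 2)
  have hb : 0 < b := lt_min (sub_pos.mpr ha) (by positivity)
  obtain ⟨δ, hδ, hnear⟩ := exists_energy_lt_of_norm_lt T V hV.continuous x₀ hb
  refine ⟨min δ ε, lt_min hδ hε, fun t₀ γ X X' X'' hγ hX hX' hflow hx₀ hv₀ => ?_⟩
  have hE₀ : dampedEnergy T V X X' t₀ < V x₀ + b :=
    hnear _ _ (hx₀.trans_le (min_le_left _ _)) (hv₀.trans_le (min_le_left _ _))
  have hE : ∀ t ∈ Ici t₀, dampedEnergy T V X X' t < V x₀ + b := fun t ht =>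
    (antitoneOn_dampedEnergy T V (convex_Ici t₀) hV hγ hX hX' hflow self_mem_Ici ht ht).trans_lt hE₀
  have hV_le_E : ∀ t, V (X t) ≤ dampedEnergy T V X X' t := fun t =>
    le_add_of_nonneg_left (by positivity)
  have hball : MapsTo X (Ici t₀) (Metric.ball x₀ ε) :=
    isPreconnected_Ici.mapsTo_ball_of_mapsTo_compl_sphere
      (fun t ht => (hX t ht).continuousAt.continuousWithinAt) self_mem_Ici
      (mem_ball_iff_norm.mpr (hx₀.trans_le (min_le_right _ _))) fun t ht hsph => by
        linarith [haV _ hsph, hV_le_E t, hE t ht, min_le_left (a - V x₀) ((c * ε) ^ 2 / 2)]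
  intro t ht
  refine ⟨mem_ball_iff_norm.mp (hball ht), ?_⟩
  have hVt : V x₀ ≤ V (X t) := by
    rcases eq_or_ne (X t) x₀ with h | h
    · rw [h]
    · exact (hmin _ (Metric.ball_subset_closedBall (hball ht)) h).le
  have hkin : ‖T (X' t)‖ < c * ε := by
    refine lt_of_pow_lt_pow_left₀ 2 (by positivity) ?_
    have := hE t ht
    simp only [dampedEnergy] at this
    linarith [min_le_right (a - V x₀) ((c * ε) ^ 2 / 2)]
  exact lt_of_mul_lt_mul_left ((hcT (X' t)).trans_lt hkin) hc.le

end DampedFlow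

theorem aadmm_flow_stability_general
    {m n : ℕ}
    (f : EuclideanSpace ℝ (Fin n) → ℝ) (g : EuclideanSpace ℝ (Fin m) → ℝ)
    (hf : ContDiff ℝ 1 f) (hg : ContDiff ℝ 1 g)
    (A : Matrix (Fin m) (Fin n) ℝ) (hA : A.rank = n)
    (V : EuclideanSpace ℝ (Fin n) → ℝ)
    (hV : ∀ x, V x = f x + g (Matrix.toEuclideanLin A x))
    (r : ℝ) (hr : 0 < r)
    (Xstar : EuclideanSpace ℝ (Fin n)) (O : Set (EuclideanSpace ℝ (Fin n)))
    (hstrict : ∀ x ∈ O \ {Xstar}, V Xstar < V x) :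
    ∀ ε > (0 : ℝ), Metric.closedBall Xstar ε ⊆ O →
      ∃ δ > (0 : ℝ), ∀ (t₀ : ℝ), 0 < t₀ →
        ∀ (X X' X'' : ℝ → EuclideanSpace ℝ (Fin n)),
        (∀ t ∈ Set.Ici t₀, HasDerivAt X (X' t) t) →
        (∀ t ∈ Set.Ici t₀, HasDerivAt X' (X'' t) t) →
        ContinuousOn X'' (Set.Ici t₀) →
        (∀ t ∈ Set.Ici t₀,
          Matrix.toEuclideanLin (Aᵀ * A) (X'' t + (r / t) • X' t)
            + gradient V (X t) = 0) →
        ‖X t₀ - Xstar‖ < δ → ‖X' t₀‖ < δ →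
        ∀ t ∈ Set.Ici t₀, ‖X t - Xstar‖ < ε ∧ ‖X' t‖ < ε := by
  intro ε hε hball
  have hVdiff : Differentiable ℝ V := by
    rw [funext hV]
    exact (hf.differentiable one_ne_zero).add
      ((hg.differentiable one_ne_zero).comp (toEuclideanLin A).toContinuousLinearMap.differentiable)
  obtain ⟨δ, hδ, hstable⟩ := dampedFlow_lyapunov_stable (toEuclideanLin A).toContinuousLinearMap V
    (toEuclideanLin_injective_of_rank_eq_card (hA.trans (Fintype.card_fin n).symm)) hVdiff hε
    fun x hx hne => hstrict x ⟨hball hx, hne⟩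
  refine ⟨δ, hδ, fun t₀ ht₀ X X' X'' hX hX' _ hflow => hstable t₀ (fun t => r / t) X X' X''
    (fun t ht => div_nonneg hr.le (ht₀.trans_le ht).le) hX hX' fun t ht => ?_⟩
  simpa only [toEuclideanLin_transpose_mul_self_apply] using hflow t ht

/-- **Stability of strict local minimizers for the A-ADMM flow.**
Let `r > 0` and let `X⋆` be a strict local minimizer of `V`, i.e. there is an open set
`O` containing `X⋆` with `V(X) > V(X⋆)` for all `X ∈ O \ {X⋆}`. Then `(X⋆, 0)` is a
stable critical point of the first-order system equivalent to the A-ADMM flow: for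
every `ε > 0` such that the closed `ε`-ball around `X⋆` is contained in `O`, there
exists `δ > 0` such that every twice continuously differentiable solution
`X : [t₀, ∞) → ℝⁿ` (with `t₀ > 0`) of the A-ADMM flow with `‖X(t₀) − X⋆‖ < δ` and
`‖Ẋ(t₀)‖ < δ` satisfies `‖X(t) − X⋆‖ < ε` and `‖Ẋ(t)‖ < ε` for all `t ≥ t₀`. -/
theorem aadmm_flow_stability
    {m n : ℕ} (hmn : n ≤ m)
    (f : EuclideanSpace ℝ (Fin n) → ℝ) (g : EuclideanSpace ℝ (Fin m) → ℝ)
    (hf : ContDiff ℝ 1 f) (hg : ContDiff ℝ 1 g)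
    (hfconv : ConvexOn ℝ Set.univ f) (hgconv : ConvexOn ℝ Set.univ g)
    (A : Matrix (Fin m) (Fin n) ℝ) (hA : A.rank = n)
    (V : EuclideanSpace ℝ (Fin n) → ℝ)
    (hV : ∀ x, V x = f x + g (Matrix.toEuclideanLin A x))
    (r : ℝ) (hr : 0 < r)
    (Xstar : EuclideanSpace ℝ (Fin n)) (O : Set (EuclideanSpace ℝ (Fin n)))
    (hO : IsOpen O) (hXO : Xstar ∈ O)
    (hstrict : ∀ x ∈ O \ {Xstar}, V Xstar < V x) :
    ∀ ε > (0 : ℝ), Metric.closedBall Xstar ε ⊆ O →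
      ∃ δ > (0 : ℝ), ∀ (t₀ : ℝ), 0 < t₀ →
        ∀ (X X' X'' : ℝ → EuclideanSpace ℝ (Fin n)),
        (∀ t ∈ Set.Ici t₀, HasDerivAt X (X' t) t) →
        (∀ t ∈ Set.Ici t₀, HasDerivAt X' (X'' t) t) →
        ContinuousOn X'' (Set.Ici t₀) →
        (∀ t ∈ Set.Ici t₀,
          Matrix.toEuclideanLin (Aᵀ * A) (X'' t + (r / t) • X' t)
            + gradient V (X t) = 0) →
        ‖X t₀ - Xstar‖ < δ → ‖X' t₀‖ < δ →
        ∀ t ∈ Set.Ici t₀, ‖X t - Xstar‖ < ε ∧ ‖X' t‖ < ε :=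
  aadmm_flow_stability_general f g hf hg A hA V hV r hr Xstar O hstrict
end
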